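/- arXiv:1302.4187 — 4 statements merged into one kernel-verified Lean document; each statement's English description precedes it below -/
import Mathlib

section
/- Propositional logic has the binary Craig interpolation property: if A and B are propositional formulas (with finite supports) such that the conjunction A ∧ B is unsatisfiable, then there exists a propositional formula I such that A ⊨ I, I ∧ B is unsatisfiable, and supp(I) ⊆ supp(A) ∩ supp(B). -/
/-- A propositional formula over variables `X`, modelled as a predicate on valuations
`X → Bool` together with a finite support on which the formula depends. -/
structure PropFormula (X : Type) where
  /-- Satisfaction: whether a valuation makes the formula true. -/
  sat : (X → Bool) → Prop
  /-- The (finite) support of the formula. -/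
  supp : Finset X
  /-- The formula depends only on the variables in its support. -/
  supp_spec : ∀ v w : X → Bool, (∀ x ∈ supp, v x = w x) → (sat v ↔ sat w)

/-- Binary Craig interpolation for propositional logic: if a conjunction `A ∧ B` is
unsatisfiable, then there is an interpolant `I` with `A ⊨ I`, `I ∧ B` unsatisfiable, and
`supp I ⊆ supp A ∩ supp B`. -/
theorem binary_craig_interpolation {X : Type} [DecidableEq X] (A B : PropFormula X)
    (hunsat : ¬ ∃ v : X → Bool, A.sat v ∧ B.sat v) :
    ∃ I : PropFormula X,
      (∀ v : X → Bool, A.sat v → I.sat v) ∧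
      (¬ ∃ v : X → Bool, I.sat v ∧ B.sat v) ∧
      I.supp ⊆ A.supp ∩ B.supp := by
  refine ⟨⟨fun v => ∃ w, A.sat w ∧ ∀ x ∈ A.supp ∩ B.supp, w x = v x,
    A.supp ∩ B.supp, ?_⟩, ?_, ?_, ?_⟩
  · intro v w h
    constructor
    · rintro ⟨u, hu, hagree⟩
      exact ⟨u, hu, fun x hx => (hagree x hx).trans (h x hx)⟩
    · rintro ⟨u, hu, hagree⟩
      exact ⟨u, hu, fun x hx => (hagree x hx).trans (h x hx).symm⟩
  · intro v hv
    exact ⟨v, hv, fun _ _ => rfl⟩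
  · rintro ⟨v, ⟨w, hw, hagree⟩, hB⟩
    set u : X → Bool := fun x => if x ∈ A.supp then w x else v x with hu
    have hAu : A.sat u := by
      rw [A.supp_spec u w (fun x hx => by simp [hu, hx])]
      exact hw
    have hBu : B.sat u := by
      rw [B.supp_spec u v (fun x hx => by
        by_cases hxa : x ∈ A.supp
        · simp only [hu, if_pos hxa]
          exact hagree x (Finset.mem_inter.mpr ⟨hxa, hx⟩)
        · simp [hu, hxa])]
      exact hB
    exact hunsat ⟨u, hAu, hBu⟩
  · exact Finset.Subset.refl _
end

section
/- Let (V,E) be a finite directed tree with a labelling φ assigning a propositional formula (with finite support) to every node. Then a tree interpolant for ((V,E), φ) exists if and only if the conjunction ⋀_{v∈V} φ(v) is unsatisfiable. -/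
/-- `I` is a tree interpolant for the directed tree with edge relation `E` and root `v₀`,
labelled by `φ`: (1) the root is labelled `false`; (2) for each node `v`, the label
`φ v` together with the interpolants of the direct children entails `I v`; (3) each
variable of `supp (I v)` occurs in the support of the label of some node in the subtree
below `v`, and also in the support of the label of some node outside that subtree. -/
def IsTreeInterpolant {V X : Type} (E : V → V → Prop) (v₀ : V)
    (φ : V → PropFormula X) (I : V → PropFormula X) : Prop :=
  (∀ val : X → Bool, ¬ (I v₀).sat val) ∧
  (∀ v : V, ∀ val : X → Bool,
      (φ v).sat val → (∀ w : V, E v w → (I w).sat val) → (I v).sat val) ∧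
  (∀ v : V, ∀ x ∈ (I v).supp,
      (∃ w : V, Relation.ReflTransGen E v w ∧ x ∈ (φ w).supp) ∧
      (∃ w' : V, ¬ Relation.ReflTransGen E v w' ∧ x ∈ (φ w').supp))

/-- For a finite directed tree `(V, E)` with root `v₀` and labelling `φ`, a tree
interpolant exists if and only if the conjunction `⋀_{v ∈ V} φ v` is unsatisfiable. -/
theorem tree_interpolant_exists_iff_unsat {V X : Type} [Finite V]
    (E : V → V → Prop) (v₀ : V)
    (hroot : ∀ w : V, ¬ E w v₀)
    (hparent : ∀ v : V, v ≠ v₀ → ∃! w : V, E w v)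
    (hacyc : Irreflexive (Relation.TransGen E))
    (φ : V → PropFormula X) :
    (∃ I : V → PropFormula X, IsTreeInterpolant E v₀ φ I) ↔
      ¬ ∃ val : X → Bool, ∀ v : V, (φ v).sat val := by
  classical
  cases nonempty_fintype V
  haveI : IsTrans V (Relation.TransGen E) := ⟨fun _ _ _ => Relation.TransGen.trans⟩
  haveI : IsIrrefl V (Relation.TransGen E) := ⟨hacyc⟩
  have hwfT : WellFounded (Relation.TransGen E) :=
    Finite.wellFounded_of_trans_of_irrefl _
  have hwfE : WellFounded E :=
    Subrelation.wf (fun h => Relation.TransGen.single h) hwfT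
  haveI : IsTrans V (Function.swap (Relation.TransGen E)) :=
    ⟨fun _ _ _ hab hbc => Relation.TransGen.trans hbc hab⟩
  haveI : IsIrrefl V (Function.swap (Relation.TransGen E)) := ⟨hacyc⟩
  have hwfT' : WellFounded (Function.swap (Relation.TransGen E)) :=
    Finite.wellFounded_of_trans_of_irrefl _
  have hwfE' : WellFounded (Function.swap E) :=
    Subrelation.wf (fun h => Relation.transGen_swap.mpr (Relation.TransGen.single h)) hwfT'
  constructor
  · rintro ⟨I, hI0, hI1, _⟩ ⟨val, hval⟩
    have key : ∀ v, (I v).sat val := by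
      intro v
      induction v using hwfE'.induction with
      | _ v ih => exact hI1 v val (hval v) (fun w hw => ih w hw)
    exact hI0 val (key v₀)
  · intro hunsat
    have reach : ∀ v, Relation.ReflTransGen E v₀ v := by
      intro v
      induction v using hwfE.induction with
      | _ v ih =>
        by_cases hv : v = v₀
        · subst hv; exact Relation.ReflTransGen.refl
        · obtain ⟨p, hp, -⟩ := hparent v hv
          exact (ih p hp).tail hp
    have comp : ∀ a w, Relation.ReflTransGen E a w → ∀ b, Relation.ReflTransGen E b w →
        Relation.ReflTransGen E a b ∨ Relation.ReflTransGen E b a := by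
      intro a w h
      induction h with
      | refl => intro b hb; exact Or.inr hb
      | tail hap hpc ih =>
        intro b hb
        rcases hb.cases_tail with heq | ⟨q, hbq, hqc⟩
        · subst heq; exact Or.inl (Relation.ReflTransGen.tail hap hpc)
        · rename_i p c
          have hcne : c ≠ v₀ := fun h => hroot q (h ▸ hqc)
          obtain ⟨u, -, huniq⟩ := hparent c hcne
          have : q = p := (huniq q hqc).trans (huniq p hpc).symm
          exact ih b (this ▸ hbq)
    have noanc : ∀ v c c', E v c → E v c' → c ≠ c' →
        ¬ Relation.ReflTransGen E c c' := by
      intro v c c' hc hc' hne h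
      rcases h.cases_tail with heq | ⟨q, hcq, hqc'⟩
      · exact hne heq.symm
      · have hc'ne : c' ≠ v₀ := fun h => hroot v (h ▸ hc')
        obtain ⟨u, -, huniq⟩ := hparent c' hc'ne
        have hqv : q = v := (huniq q hqc').trans (huniq v hc').symm
        exact hacyc v (Relation.TransGen.head' hc (hqv ▸ hcq))
    have disj : ∀ v c c', E v c → E v c' → c ≠ c' → ∀ w,
        Relation.ReflTransGen E c w → ¬ Relation.ReflTransGen E c' w := by
      intro v c c' hc hc' hne w hcw hc'w
      rcases comp c w hcw c' hc'w with h | h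
      · exact noanc v c c' hc hc' hne h
      · exact noanc v c' c hc' hc (Ne.symm hne) h
    set S : V → Finset X := fun v =>
      ((Finset.univ : Finset V).biUnion (fun w => (φ w).supp)).filter (fun x =>
      (∃ w, Relation.ReflTransGen E v w ∧ x ∈ (φ w).supp) ∧
      (∃ w', ¬ Relation.ReflTransGen E v w' ∧ x ∈ (φ w').supp)) with hS
    have Sspec : ∀ v x, x ∈ S v ↔
        ((∃ w, Relation.ReflTransGen E v w ∧ x ∈ (φ w).supp) ∧
         (∃ w', ¬ Relation.ReflTransGen E v w' ∧ x ∈ (φ w').supp)) := by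
      intro v x
      rw [hS]
      simp only [Finset.mem_filter, Finset.mem_biUnion, Finset.mem_univ, true_and]
      constructor
      · exact fun h => h.2
      · exact fun h => ⟨⟨h.1.choose, h.1.choose_spec.2⟩, h⟩
    let I : V → PropFormula X := fun v =>
      { sat := fun val => ∃ val', (∀ x ∈ S v, val' x = val x) ∧
          ∀ w, Relation.ReflTransGen E v w → (φ w).sat val'
        supp := S v
        supp_spec := by
          intro a b hab
          constructor
          · rintro ⟨val', h1, h2⟩
            exact ⟨val', fun x hx => (h1 x hx).trans (hab x hx), h2⟩
          · rintro ⟨val', h1, h2⟩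
            exact ⟨val', fun x hx => (h1 x hx).trans (hab x hx).symm, h2⟩ }
    refine ⟨I, ?_, ?_, ?_⟩
    · intro val hsat
      obtain ⟨val', -, h2⟩ := hsat
      exact hunsat ⟨val', fun v => h2 v (reach v)⟩
    · intro v val hφv hch
      have hch' : ∀ c, E v c → ∃ val', (∀ x ∈ S c, val' x = val x) ∧
          ∀ w, Relation.ReflTransGen E c w → (φ w).sat val' := hch
      choose f h1 h2 using hch'
      set P : X → V → Prop := fun x c => E v c ∧
        ∃ w, Relation.ReflTransGen E c w ∧ x ∈ (φ w).supp with hP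
      let val' : X → Bool := fun x =>
        if h : ∃ c, P x c then f h.choose h.choose_spec.1 x else val x
      -- key lemma A
      have keyA : ∀ x c (hc : E v c),
          (∃ w, Relation.ReflTransGen E c w ∧ x ∈ (φ w).supp) → val' x = f c hc x := by
        intro x c hc hin
        have hex : ∃ c', P x c' := ⟨c, hc, hin⟩
        show (if h : ∃ c, P x c then f h.choose h.choose_spec.1 x else val x) = f c hc x
        rw [dif_pos hex]
        set c₀ := hex.choose with hc₀def
        have hc₀ : E v c₀ := hex.choose_spec.1
        have hin₀ : ∃ w, Relation.ReflTransGen E c₀ w ∧ x ∈ (φ w).supp :=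
          hex.choose_spec.2
        by_cases hcc : c₀ = c
        · subst hcc; rfl
        · obtain ⟨w1, hcw1, hx1⟩ := hin
          obtain ⟨w0, hcw0, hx0⟩ := hin₀
          have hxS₀ : x ∈ S c₀ := by
            rw [Sspec]
            exact ⟨⟨w0, hcw0, hx0⟩, ⟨w1, fun h => disj v c₀ c hc₀ hc hcc w1 h hcw1, hx1⟩⟩
          have hxS : x ∈ S c := by
            rw [Sspec]
            exact ⟨⟨w1, hcw1, hx1⟩, ⟨w0, fun h => disj v c c₀ hc hc₀ (Ne.symm hcc) w0 h hcw0, hx0⟩⟩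
          rw [h1 c₀ hc₀ x hxS₀, (h1 c hc x hxS).symm]
      refine ⟨val', ?_, ?_⟩
      · intro x hx
        rw [Sspec] at hx
        obtain ⟨-, w', hw', hxw'⟩ := hx
        by_cases hex : ∃ c, P x c
        · have hc₀ : E v hex.choose := hex.choose_spec.1
          rw [keyA x hex.choose hc₀ hex.choose_spec.2]
          apply h1
          rw [Sspec]
          refine ⟨hex.choose_spec.2, ⟨w', fun h => hw' (Relation.ReflTransGen.head hc₀ h), hxw'⟩⟩
        · show (if h : ∃ c, P x c then f h.choose h.choose_spec.1 x else val x) = val x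
          rw [dif_neg hex]
      · intro w hvw
        rcases hvw.cases_head with heq | ⟨c, hc, hcw⟩
        · subst heq
          rw [(φ v).supp_spec val' val ?_]
          · exact hφv
          · intro x hxw
            by_cases hex : ∃ c, P x c
            · have hc₀ : E v hex.choose := hex.choose_spec.1
              rw [keyA x hex.choose hc₀ hex.choose_spec.2]
              apply h1
              rw [Sspec]
              refine ⟨hex.choose_spec.2, ⟨v, fun h =>
                hacyc v (Relation.TransGen.head' hc₀ h), hxw⟩⟩
            · show (if h : ∃ c, P x c then f h.choose h.choose_spec.1 x else val x) = val x
              rw [dif_neg hex]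
        · rw [(φ w).supp_spec val' (f c hc) ?_]
          · exact h2 c hc w hcw
          · intro x hxw
            exact keyA x c hc ⟨w, hcw, hxw⟩
    · intro v x hx
      rw [show (I v).supp = S v from rfl, Sspec] at hx
      exact hx
end

section
/- For propositional formulas T₁, …, T_n (with finite supports), the conjunction T₁ ∧ T₂ ∧ ⋯ ∧ T_n is unsatisfiable if and only if there exists an inductive sequence of interpolants, i.e., formulas I₀, I₁, …, I_n such that: (1) I₀ = true and I_n = false; (2) for all i ∈ {1, …, n}, the entailment I_{i-1} ∧ T_i ⊨ I_i holds; and (3) for all i ∈ {0, …, n}, supp(I_i) ⊆ (supp(T₁) ∪ ⋯ ∪ supp(T_i)) ∩ (supp(T_{i+1}) ∪ ⋯ ∪ supp(T_n)). -/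
namespace PropFormula

variable {X : Type}

theorem dependsOn_sat (φ : PropFormula X) : DependsOn φ.sat φ.supp :=
  fun _ _ h => propext (φ.supp_spec _ _ h)

def project (P : (X → Bool) → Prop) (S : Finset X) : PropFormula X where
  sat v := ∃ w, (∀ x ∈ S, w x = v x) ∧ P w
  supp := S
  supp_spec v v' h := by
    constructor <;> rintro ⟨w, hw, hP⟩
    exacts [⟨w, fun x hx => (hw x hx).trans (h x hx), hP⟩,
      ⟨w, fun x hx => (hw x hx).trans (h x hx).symm, hP⟩]

variable {P Q : (X → Bool) → Prop} {S : Finset X} {v : X → Bool}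

theorem project_sat_of (h : P v) : (project P S).sat v :=
  ⟨v, fun _ _ => rfl, h⟩

theorem project_sat_mono {S' : Finset X} (hPQ : ∀ w, P w → Q w) (hS : S' ⊆ S)
    (h : (project P S).sat v) : (project Q S').sat v :=
  let ⟨w, hw, hP⟩ := h
  ⟨w, fun x hx => hw x (hS hx), hPQ w hP⟩

theorem project_sat_and [DecidableEq X] {A B C : Finset X} (hP : DependsOn P A)
    (hQ : DependsOn Q C) (hCB : C ⊆ B) (h : (project P (A ∩ B)).sat v) (hQv : Q v) :
    (project (fun w => P w ∧ Q w) B).sat v := by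
  obtain ⟨w, hwv, hPw⟩ := h
  have hglue : ∀ x ∈ B, A.piecewise w v x = v x := by
    intro x hx
    by_cases hxA : x ∈ A
    · rw [Finset.piecewise_eq_of_mem _ _ _ hxA]
      exact hwv x (Finset.mem_inter.mpr ⟨hxA, hx⟩)
    · exact Finset.piecewise_eq_of_notMem _ _ _ hxA
  refine ⟨A.piecewise w v, hglue, ?_, ?_⟩
  · rwa [hP fun x hx => Finset.piecewise_eq_of_mem _ _ _ hx]
  · rwa [hQ fun x hx => hglue x (hCB hx)]

end PropFormula

open PropFormula

section Sequence

variable {X : Type} {n : ℕ}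

def SatBefore (T : Fin n → PropFormula X) (i : Fin (n + 1)) (v : X → Bool) : Prop :=
  ∀ j : Fin n, (j : ℕ) < (i : ℕ) → (T j).sat v

theorem satBefore_succ {T : Fin n → PropFormula X} {i : Fin n} {v : X → Bool}
    (hv : SatBefore T i.castSucc v) (hT : (T i).sat v) : SatBefore T i.succ v := by
  intro j hj
  rw [Fin.val_succ] at hj
  rcases Nat.lt_succ_iff_lt_or_eq.mp hj with hlt | heq
  · exact hv j hlt
  · rwa [Fin.ext heq]

variable [DecidableEq X] (T : Fin n → PropFormula X)

def suppBefore (i : Fin (n + 1)) : Finset X :=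
  (Finset.univ.filter (fun j : Fin n => (j : ℕ) < (i : ℕ))).biUnion fun j => (T j).supp

def suppFrom (i : Fin (n + 1)) : Finset X :=
  (Finset.univ.filter (fun j : Fin n => (i : ℕ) ≤ (j : ℕ))).biUnion fun j => (T j).supp

variable {T}

theorem supp_subset_suppBefore {i : Fin (n + 1)} {j : Fin n} (h : (j : ℕ) < (i : ℕ)) :
    (T j).supp ⊆ suppBefore T i :=
  Finset.subset_biUnion_of_mem (fun j => (T j).supp) (by simpa using h)

theorem supp_subset_suppFrom {i : Fin (n + 1)} {j : Fin n} (h : (i : ℕ) ≤ (j : ℕ)) :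
    (T j).supp ⊆ suppFrom T i :=
  Finset.subset_biUnion_of_mem (fun j => (T j).supp) (by simpa using h)

theorem suppFrom_succ_subset (i : Fin n) : suppFrom T i.succ ⊆ suppFrom T i.castSucc :=
  Finset.biUnion_subset.mpr fun j hj =>
    supp_subset_suppFrom (by
      simp only [Finset.mem_filter, Finset.mem_univ, true_and, Fin.val_succ] at hj
      rw [Fin.val_castSucc]; omega)

theorem dependsOn_satBefore (i : Fin (n + 1)) : DependsOn (SatBefore T i) (suppBefore T i) :=
  fun _ _ h => propext <| forall_congr' fun j => imp_congr_right fun hj =>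
    Eq.to_iff <| (T j).dependsOn_sat fun x hx => h x (supp_subset_suppBefore hj hx)

end Sequence

/-- For propositional formulas `T 0, …, T (n-1)`, the conjunction `T 0 ∧ ⋯ ∧ T (n-1)` is
unsatisfiable if and only if there is an inductive sequence of interpolants
`I 0, …, I n`: (1) `I 0` is `true` and `I n` is `false`; (2) for every `i < n`,
`I i ∧ T i ⊨ I (i+1)`; (3) for every `i ≤ n`,
`supp (I i) ⊆ (supp (T 0) ∪ ⋯ ∪ supp (T (i-1))) ∩ (supp (T i) ∪ ⋯ ∪ supp (T (n-1)))`. -/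
theorem inductive_interpolant_sequence_iff_unsat {X : Type} [DecidableEq X]
    (n : ℕ) (T : Fin n → PropFormula X) :
    (¬ ∃ val : X → Bool, ∀ i : Fin n, (T i).sat val) ↔
      ∃ I : Fin (n + 1) → PropFormula X,
        (∀ val : X → Bool, (I 0).sat val) ∧
        (∀ val : X → Bool, ¬ (I (Fin.last n)).sat val) ∧
        (∀ i : Fin n, ∀ val : X → Bool,
            (I i.castSucc).sat val → (T i).sat val → (I i.succ).sat val) ∧
        (∀ i : Fin (n + 1),
            (I i).supp ⊆
              ((Finset.univ.filter (fun j : Fin n => (j : ℕ) < (i : ℕ))).biUnion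
                  fun j => (T j).supp) ∩
                ((Finset.univ.filter (fun j : Fin n => (i : ℕ) ≤ (j : ℕ))).biUnion
                  fun j => (T j).supp)) := by
  constructor
  · intro hunsat
    refine ⟨fun i => project (SatBefore T i) (suppBefore T i ∩ suppFrom T i),
      fun _ => project_sat_of fun j hj => absurd hj (by simp), ?_, ?_, fun _ => subset_rfl⟩
    · rintro val ⟨w, -, hw⟩
      exact hunsat ⟨w, fun j => hw j j.is_lt⟩
    · intro i val hI hT
      have hglued : (project (fun w => SatBefore T i.castSucc w ∧ (T i).sat w)
          (suppFrom T i.castSucc)).sat val :=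
        project_sat_and (dependsOn_satBefore _) (T i).dependsOn_sat
          (supp_subset_suppFrom (Fin.val_castSucc i).ge) hI hT
      exact project_sat_mono (fun _ h => satBefore_succ h.1 h.2)
        (Finset.inter_subset_right.trans (suppFrom_succ_subset i)) hglued
  · rintro ⟨I, hfirst, hlast, hstep, -⟩ ⟨val, hval⟩
    have hall : ∀ i, (I i).sat val := fun i =>
      Fin.induction (hfirst val) (fun j ih => hstep j val ih (hval j)) i
    exact hlast val (hall (Fin.last n))
end

section
/- Symmetric interpolants exist exactly for unsatisfiable conjunctions: for propositional formulas φ₁, …, φ_n (with finite supports), the conjunction φ₁ ∧ ⋯ ∧ φ_n is unsatisfiable if and only if there exist formulas I₁, …, I_n such that φ_i ⊨ I_i for every i, supp(I_i) ⊆ supp(φ_i) ∩ (⋃_{j≠i} supp(φ_j)) for every i, and the conjunction I₁ ∧ ⋯ ∧ I_n is unsatisfiable. -/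
/-- Symmetric interpolants exist exactly for unsatisfiable conjunctions: the conjunction
`φ 0 ∧ ⋯ ∧ φ (n-1)` is unsatisfiable if and only if there are formulas `I 0, …, I (n-1)`
such that `φ i ⊨ I i` for every `i`, `supp (I i) ⊆ supp (φ i) ∩ ⋃_{j ≠ i} supp (φ j)`
for every `i`, and the conjunction `I 0 ∧ ⋯ ∧ I (n-1)` is unsatisfiable. -/
theorem symmetric_interpolants_iff_unsat {X : Type} [DecidableEq X]
    (n : ℕ) (φ : Fin n → PropFormula X) :
    (¬ ∃ val : X → Bool, ∀ i : Fin n, (φ i).sat val) ↔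
      ∃ I : Fin n → PropFormula X,
        (∀ i : Fin n, ∀ val : X → Bool, (φ i).sat val → (I i).sat val) ∧
        (∀ i : Fin n,
            (I i).supp ⊆
              (φ i).supp ∩
                ((Finset.univ.filter (fun j : Fin n => j ≠ i)).biUnion
                  fun j => (φ j).supp)) ∧
        (¬ ∃ val : X → Bool, ∀ i : Fin n, (I i).sat val) := by
  classical
  set S : Fin n → Finset X := fun i =>
    (φ i).supp ∩ ((Finset.univ.filter (fun j : Fin n => j ≠ i)).biUnion
      fun j => (φ j).supp) with hSdef
  have memS : ∀ (i : Fin n) (x : X),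
      x ∈ S i ↔ x ∈ (φ i).supp ∧ ∃ j, j ≠ i ∧ x ∈ (φ j).supp := by
    intro i x
    simp [hSdef, Finset.mem_inter, Finset.mem_biUnion, Finset.mem_filter]
  constructor
  · intro hunsat
    refine ⟨fun i =>
      ⟨fun val => ∃ w, (φ i).sat w ∧ ∀ x ∈ S i, w x = val x, S i, ?_⟩, ?_, ?_, ?_⟩
    · intro v w hvw
      constructor
      · rintro ⟨u, hu, hus⟩
        exact ⟨u, hu, fun x hx => (hus x hx).trans (hvw x hx)⟩
      · rintro ⟨u, hu, hus⟩
        exact ⟨u, hu, fun x hx => (hus x hx).trans (hvw x hx).symm⟩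
    · intro i val h
      exact ⟨val, h, fun _ _ => rfl⟩
    · intro i
      exact Finset.Subset.refl _
    · rintro ⟨val, hval⟩
      choose w hw hws using hval
      set u : X → Bool := fun x =>
        if h : ∃ i, x ∈ (φ i).supp ∧ x ∉ S i then w h.choose x else val x with hu
      apply hunsat
      refine ⟨u, fun i => ?_⟩
      rw [(φ i).supp_spec u (w i) ?_]
      · exact hw i
      · intro x hx
        by_cases hxS : x ∈ S i
        · have hne : ¬ ∃ k, x ∈ (φ k).supp ∧ x ∉ S k := by
            rintro ⟨k, hk1, hk2⟩
            obtain ⟨hxi, j, hji, hxj⟩ := (memS i x).1 hxS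
            apply hk2
            rw [memS]
            refine ⟨hk1, ?_⟩
            by_cases hki : k = i
            · exact ⟨j, by simpa [hki] using hji, hxj⟩
            · exact ⟨i, fun h => hki h.symm, hxi⟩
          simp only [hu, dif_neg hne]
          exact ((hws i x hxS)).symm
        · have hex : ∃ k, x ∈ (φ k).supp ∧ x ∉ S k := ⟨i, hx, hxS⟩
          have hch := hex.choose_spec
          have hki : hex.choose = i := by
            by_contra hne
            apply hxS
            rw [memS]
            exact ⟨hx, hex.choose, hne, hch.1⟩
          simp only [hu, dif_pos hex, hki]
  · rintro ⟨I, hent, _, hIunsat⟩ ⟨val, hval⟩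
    exact hIunsat ⟨val, fun i => hent i val (hval i)⟩
end
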